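/- Let τ0 > 0 and for (d,v) ∈ ℝ² write Z = d + τ0·v. Let D ⊂ ℝ² be a bounded Lebesgue-measurable set, D0 = D ∩ {Z ≥ 0}, D1 = D ∩ {Z < 0}, and let u : ℝ² → ℝ be Lebesgue integrable on D with u(d,v) > 0 for all (d,v) ∈ D. Then U is differentiable in σ on (0,∞), with ∂U/∂σ(λ,σ) = (1/(√(2π)·σ²)) · [ ∬_{D0} u(d,v) exp(−(Z−λ)²/(2σ²)) (Z−λ) dd dv − ∬_{D1} u(d,v) exp(−(Z−λ)²/(2σ²)) (Z−λ) dd dv ], and for all λ ∈ ℝ and σ > 0 this satisfies the identity ∂U/∂σ(λ,σ) = σ · ∂²U/∂λ²(λ,σ). -/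

import Mathlib

open MeasureTheory Real Filter

/-- The Gaussian Q-function `Q(x) = (1/√(2π)) ∫_x^∞ exp(−t²/2) dt`. -/
noncomputable def Qfun (x : ℝ) : ℝ :=
  (Real.sqrt (2 * Real.pi))⁻¹ * ∫ t in Set.Ioi x, Real.exp (-t ^ 2 / 2)

/-- The wrong-decision probability `P_w(d,v;λ,σ)`. -/
noncomputable def Pw (τ0 σ lam : ℝ) (p : ℝ × ℝ) : ℝ :=
  if 0 ≤ p.1 + τ0 * p.2 then Qfun ((p.1 + τ0 * p.2 - lam) / σ)
  else Qfun (-(p.1 + τ0 * p.2 - lam) / σ)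

/-- The total wrong decision loss `U(λ,σ) = ∬_D u(d,v) P_w(d,v;λ,σ) dd dv`. -/
noncomputable def Uloss (τ0 : ℝ) (D : Set (ℝ × ℝ)) (u : ℝ × ℝ → ℝ) (lam σ : ℝ) : ℝ :=
  ∫ p in D, u p * Pw τ0 σ lam p

/-!
Write `Z = d + τ0 v` and `s = ±1` for the side of the decision, so that the integrand is
`u · Q(s (Z - λ)/σ)`. From `Q' = -φ`, with `φ` the standard normal density, and `φ' = -x φ`,
`∂σ Q(s w/σ) = s (w/σ²) φ(w/σ)` and `∂²λ Q(s (Z - λ)/σ) = s ((Z - λ)/σ³) φ((Z - λ)/σ)`: the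
Gaussian kernel solves the heat equation `∂σ = σ ∂²λ` pointwise. Because `|x| φ(x) ≤ φ(0)`, all
these derivatives are bounded uniformly in `Z` for `σ` near a positive value, so they may be taken
under the integral against the integrable weight `u`; splitting according to the sign of `Z` gives
the explicit formula.
-/

open Topology

noncomputable def gaussDensity (x : ℝ) : ℝ := (√(2 * π))⁻¹ * exp (-x ^ 2 / 2)

lemma exp_neg_sq_div_two_eq (t : ℝ) : exp (-t ^ 2 / 2) = exp (-(1 / 2) * t ^ 2) := by
  ring_nf

lemma integrable_exp_neg_sq_div_two : Integrable fun t : ℝ => exp (-t ^ 2 / 2) := by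
  simpa only [exp_neg_sq_div_two_eq] using integrable_exp_neg_mul_sq (b := 1 / 2) (by norm_num)

lemma integral_exp_neg_sq_div_two : ∫ t : ℝ, exp (-t ^ 2 / 2) = √(2 * π) := by
  simp only [exp_neg_sq_div_two_eq, integral_gaussian]
  congr 1
  ring

lemma Qfun_eq_sub (x : ℝ) :
    Qfun x = (√(2 * π))⁻¹ * ((∫ t in Set.Ioi 0, exp (-t ^ 2 / 2)) -
      ∫ t in (0 : ℝ)..x, exp (-t ^ 2 / 2)) := by
  rw [Qfun, ← intervalIntegral.integral_interval_add_Ioi (a := 0) (b := x)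
    integrable_exp_neg_sq_div_two.integrableOn integrable_exp_neg_sq_div_two.integrableOn]
  ring

lemma hasDerivAt_Qfun (x : ℝ) : HasDerivAt Qfun (-gaussDensity x) x := by
  have hcont : Continuous fun t : ℝ => exp (-t ^ 2 / 2) := by fun_prop
  have hFTC : HasDerivAt (fun y => ∫ t in (0 : ℝ)..y, exp (-t ^ 2 / 2)) (exp (-x ^ 2 / 2)) x :=
    intervalIntegral.integral_hasDerivAt_right integrable_exp_neg_sq_div_two.intervalIntegrable
      hcont.aestronglyMeasurable.stronglyMeasurableAtFilter hcont.continuousAt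
  rw [show Qfun = _ from funext Qfun_eq_sub, gaussDensity, ← mul_neg]
  exact (hFTC.const_sub _).const_mul _

lemma continuous_Qfun : Continuous Qfun :=
  continuous_iff_continuousAt.mpr fun x => (hasDerivAt_Qfun x).continuousAt

lemma abs_Qfun_le_one (x : ℝ) : |Qfun x| ≤ 1 := by
  have hpos : ∀ t, 0 ≤ exp (-t ^ 2 / 2) := fun t => (exp_pos _).le
  have h0 : 0 ≤ ∫ t in Set.Ioi x, exp (-t ^ 2 / 2) :=
    setIntegral_nonneg measurableSet_Ioi fun t _ => hpos t
  have hle : ∫ t in Set.Ioi x, exp (-t ^ 2 / 2) ≤ √(2 * π) :=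
    integral_exp_neg_sq_div_two ▸
      setIntegral_le_integral integrable_exp_neg_sq_div_two (Eventually.of_forall hpos)
  rw [Qfun, abs_of_nonneg (by positivity), inv_mul_le_iff₀ (by positivity), mul_one]
  exact hle

lemma gaussDensity_neg (x : ℝ) : gaussDensity (-x) = gaussDensity x := by
  simp [gaussDensity]

lemma gaussDensity_nonneg (x : ℝ) : 0 ≤ gaussDensity x := by
  unfold gaussDensity; positivity

lemma gaussDensity_le (x : ℝ) : gaussDensity x ≤ (√(2 * π))⁻¹ := by
  unfold gaussDensity
  exact mul_le_of_le_one_right (by positivity) (exp_le_one_iff.mpr (by nlinarith [sq_nonneg x]))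

-- `|x| ≤ 1 + x²/2 ≤ exp (x²/2)`
lemma abs_mul_gaussDensity_le (x : ℝ) : |x| * gaussDensity x ≤ (√(2 * π))⁻¹ := by
  have hx : |x| ≤ exp (x ^ 2 / 2) := by
    nlinarith [add_one_le_exp (x ^ 2 / 2), sq_abs x, sq_nonneg (|x| - 1)]
  have hexp : exp (-x ^ 2 / 2) * exp (x ^ 2 / 2) = 1 := by
    rw [← exp_add, neg_div, neg_add_cancel, exp_zero]
  unfold gaussDensity
  calc |x| * ((√(2 * π))⁻¹ * exp (-x ^ 2 / 2))
      ≤ exp (x ^ 2 / 2) * ((√(2 * π))⁻¹ * exp (-x ^ 2 / 2)) := by gcongr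
    _ = (√(2 * π))⁻¹ := by rw [mul_left_comm, mul_comm _ (exp _), hexp, mul_one]

lemma hasDerivAt_gaussDensity (x : ℝ) :
    HasDerivAt gaussDensity (-x * gaussDensity x) x := by
  have hexp : HasDerivAt (fun y : ℝ => -y ^ 2 / 2) (-x) x :=
    ((hasDerivAt_pow 2 x).fun_neg.div_const 2).congr_deriv (by ring)
  exact (hexp.exp.const_mul (√(2 * π))⁻¹).congr_deriv (by rw [gaussDensity]; ring)

-- Unlike `SignType.sign`, it is `1` at `0`, matching the case split `0 ≤ Z` in `Pw`.
noncomputable def decisionSign (z : ℝ) : ℝ := if 0 ≤ z then 1 else -1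

lemma abs_decisionSign (z : ℝ) : |decisionSign z| = 1 := by
  unfold decisionSign; split_ifs <;> simp

lemma measurable_decisionSign : Measurable decisionSign :=
  Measurable.ite measurableSet_Ici measurable_const measurable_const

lemma abs_decisionSign_mul (z y : ℝ) : |decisionSign z * y| = |y| := by
  rw [abs_mul, abs_decisionSign, one_mul]

lemma abs_gaussDensity_div_le (x σ : ℝ) : |gaussDensity x / σ| ≤ (√(2 * π))⁻¹ / |σ| := by
  rw [abs_div, abs_of_nonneg (gaussDensity_nonneg x)]
  gcongr
  exact gaussDensity_le x

lemma gaussDensity_decisionSign_mul (z x : ℝ) :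
    gaussDensity (decisionSign z * x) = gaussDensity x := by
  unfold decisionSign; split_ifs <;> simp [gaussDensity_neg]

noncomputable def wrongProb (σ l z : ℝ) : ℝ := Qfun (decisionSign z * (z - l) / σ)

lemma Pw_eq_wrongProb (τ0 σ l : ℝ) (p : ℝ × ℝ) :
    Pw τ0 σ l p = wrongProb σ l (p.1 + τ0 * p.2) := by
  unfold Pw wrongProb decisionSign
  split_ifs <;> simp

lemma abs_wrongProb_le_one (σ l z : ℝ) : |wrongProb σ l z| ≤ 1 :=
  abs_Qfun_le_one _

lemma measurable_wrongProb (σ l : ℝ) : Measurable (wrongProb σ l) :=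
  continuous_Qfun.measurable.comp
    ((measurable_decisionSign.mul (measurable_id.sub_const l)).div_const σ)

noncomputable def qfunScaleDeriv (σ w : ℝ) : ℝ := w / σ ^ 2 * gaussDensity (w / σ)

lemma hasDerivAt_Qfun_div {σ : ℝ} (hσ : σ ≠ 0) (w : ℝ) :
    HasDerivAt (fun s => Qfun (w / s)) (qfunScaleDeriv σ w) σ := by
  have hinner : HasDerivAt (fun s => w / s) (-(w / σ ^ 2)) σ := by
    simpa [div_eq_mul_inv] using (hasDerivAt_inv hσ).const_mul w
  exact ((hasDerivAt_Qfun _).comp σ hinner).congr_deriv (by rw [qfunScaleDeriv]; ring)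

lemma qfunScaleDeriv_decisionSign_mul (σ z w : ℝ) :
    qfunScaleDeriv σ (decisionSign z * w) = decisionSign z * qfunScaleDeriv σ w := by
  simp only [qfunScaleDeriv, mul_div_assoc, gaussDensity_decisionSign_mul]
  ring

lemma abs_qfunScaleDeriv_le (σ w : ℝ) : |qfunScaleDeriv σ w| ≤ (√(2 * π))⁻¹ / |σ| := by
  have h : qfunScaleDeriv σ w = w / σ * gaussDensity (w / σ) / σ := by
    rw [qfunScaleDeriv]; ring
  rw [h, abs_div, abs_mul, abs_of_nonneg (gaussDensity_nonneg _)]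
  gcongr
  exact abs_mul_gaussDensity_le _

lemma qfunScaleDeriv_eq (σ w : ℝ) :
    qfunScaleDeriv σ w = (√(2 * π) * σ ^ 2)⁻¹ * (exp (-w ^ 2 / (2 * σ ^ 2)) * w) := by
  rw [qfunScaleDeriv, gaussDensity, show -(w / σ) ^ 2 / 2 = -w ^ 2 / (2 * σ ^ 2) by ring]
  ring

lemma measurable_qfunScaleDeriv (σ : ℝ) : Measurable (qfunScaleDeriv σ) := by
  unfold qfunScaleDeriv gaussDensity; fun_prop

lemma measurable_decisionSign_mul_qfunScaleDeriv (σ l : ℝ) :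
    Measurable fun z => decisionSign z * qfunScaleDeriv σ (z - l) :=
  measurable_decisionSign.mul ((measurable_qfunScaleDeriv σ).comp (measurable_id.sub_const l))

lemma measurable_decisionSign_mul_gaussDensity (σ l : ℝ) :
    Measurable fun z => decisionSign z * (gaussDensity ((z - l) / σ) / σ) :=
  measurable_decisionSign.mul (by unfold gaussDensity; fun_prop)

lemma hasDerivAt_wrongProb_scale {σ : ℝ} (hσ : σ ≠ 0) (l z : ℝ) :
    HasDerivAt (fun s => wrongProb s l z) (decisionSign z * qfunScaleDeriv σ (z - l)) σ :=
  qfunScaleDeriv_decisionSign_mul σ z (z - l) ▸ hasDerivAt_Qfun_div hσ _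

lemma hasDerivAt_wrongProb_threshold (σ l z : ℝ) :
    HasDerivAt (fun l => wrongProb σ l z)
      (decisionSign z * (gaussDensity ((z - l) / σ) / σ)) l := by
  have hinner : HasDerivAt (fun l => decisionSign z * (z - l) / σ) (decisionSign z * -1 / σ) l :=
    (((hasDerivAt_id l).const_sub z).const_mul _).div_const σ
  exact ((hasDerivAt_Qfun _).comp l hinner).congr_deriv
    (by simp only [mul_div_assoc, gaussDensity_decisionSign_mul]; ring)

lemma hasDerivAt_gaussDensity_threshold (σ l z : ℝ) :
    HasDerivAt (fun l => decisionSign z * (gaussDensity ((z - l) / σ) / σ))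
      (decisionSign z * qfunScaleDeriv σ (z - l) / σ) l := by
  have hinner : HasDerivAt (fun l => (z - l) / σ) (-1 / σ) l :=
    ((hasDerivAt_id l).const_sub z).div_const σ
  exact ((((hasDerivAt_gaussDensity _).comp l hinner).div_const σ).const_mul _).congr_deriv
    (by rw [qfunScaleDeriv]; ring)

section Integral

variable {α : Type*} [MeasurableSpace α] {μ : Measure α} {u : α → ℝ}

lemma hasDerivAt_integral_mul_of_bounded (hu : Integrable u μ) {F F' : ℝ → α → ℝ}
    {x₀ C₀ C : ℝ} {s : Set ℝ} (hs : s ∈ 𝓝 x₀)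
    (hF_meas : ∀ x, AEStronglyMeasurable (F x) μ) (hF'_meas : AEStronglyMeasurable (F' x₀) μ)
    (hF : ∀ a, |F x₀ a| ≤ C₀) (hF' : ∀ x ∈ s, ∀ a, |F' x a| ≤ C)
    (hdiff : ∀ x ∈ s, ∀ a, HasDerivAt (F · a) (F' x a) x) :
    HasDerivAt (fun x => ∫ a, u a * F x a ∂μ) (∫ a, u a * F' x₀ a ∂μ) x₀ := by
  refine (hasDerivAt_integral_of_dominated_loc_of_deriv_le (F' := fun x a => u a * F' x a)
    (bound := fun a => C * ‖u a‖) hs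
    (Eventually.of_forall fun x => hu.1.mul (hF_meas x)) ?_ (hu.1.mul hF'_meas) ?_
    (hu.norm.const_mul C) ?_).2
  · exact hu.mul_bdd (hF_meas x₀) (Eventually.of_forall hF)
  · refine Eventually.of_forall fun a x hx => ?_
    rw [norm_mul, mul_comm]
    exact mul_le_mul_of_nonneg_right (hF' x hx a) (norm_nonneg _)
  · exact Eventually.of_forall fun a x hx => (hdiff x hx a).const_mul (u a)

variable {Z : α → ℝ}

lemma hasDerivAt_integral_wrongProb_scale (hu : Integrable u μ) (hZ : Measurable Z) {σ : ℝ}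
    (hσ : 0 < σ) (l : ℝ) :
    HasDerivAt (fun s => ∫ a, u a * wrongProb s l (Z a) ∂μ)
      (∫ a, u a * (decisionSign (Z a) * qfunScaleDeriv σ (Z a - l)) ∂μ) σ := by
  have hpos : ∀ x ∈ Set.Ioi (σ / 2), 0 < x := fun x hx => (half_pos hσ).trans hx
  refine hasDerivAt_integral_mul_of_bounded hu (Ioi_mem_nhds (half_lt_self hσ))
    (fun x => ((measurable_wrongProb x l).comp hZ).aestronglyMeasurable)
    ((measurable_decisionSign_mul_qfunScaleDeriv σ l).comp hZ).aestronglyMeasurable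
    (fun _ => abs_wrongProb_le_one _ _ _) (C := (√(2 * π))⁻¹ / (σ / 2)) (fun x hx a => ?_)
    (fun x hx a => hasDerivAt_wrongProb_scale (hpos x hx).ne' l (Z a))
  rw [abs_decisionSign_mul]
  refine (abs_qfunScaleDeriv_le x _).trans ?_
  rw [abs_of_pos (hpos x hx)]
  gcongr
  exact hx.le

lemma hasDerivAt_integral_wrongProb_threshold (hu : Integrable u μ) (hZ : Measurable Z)
    (σ l : ℝ) :
    HasDerivAt (fun l => ∫ a, u a * wrongProb σ l (Z a) ∂μ)
      (∫ a, u a * (decisionSign (Z a) * (gaussDensity ((Z a - l) / σ) / σ)) ∂μ) l :=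
  hasDerivAt_integral_mul_of_bounded hu univ_mem
    (fun x => ((measurable_wrongProb σ x).comp hZ).aestronglyMeasurable)
    ((measurable_decisionSign_mul_gaussDensity σ l).comp hZ).aestronglyMeasurable
    (fun _ => abs_wrongProb_le_one _ _ _)
    (fun _ _ _ => (abs_decisionSign_mul _ _).trans_le (abs_gaussDensity_div_le _ _))
    (fun x _ a => hasDerivAt_wrongProb_threshold σ x (Z a))

lemma hasDerivAt_integral_gaussDensity_threshold (hu : Integrable u μ) (hZ : Measurable Z)
    (σ l : ℝ) :
    HasDerivAt (fun l => ∫ a, u a * (decisionSign (Z a) * (gaussDensity ((Z a - l) / σ) / σ)) ∂μ)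
      (∫ a, u a * (decisionSign (Z a) * qfunScaleDeriv σ (Z a - l) / σ) ∂μ) l := by
  refine hasDerivAt_integral_mul_of_bounded hu univ_mem
    (C := (√(2 * π))⁻¹ / |σ| / |σ|)
    (fun x => ((measurable_decisionSign_mul_gaussDensity σ x).comp hZ).aestronglyMeasurable)
    (((measurable_decisionSign_mul_qfunScaleDeriv σ l).comp hZ).div_const σ).aestronglyMeasurable
    (fun a => (abs_decisionSign_mul _ _).trans_le (abs_gaussDensity_div_le _ _))
    (fun x _ a => ?_) (fun x _ a => hasDerivAt_gaussDensity_threshold σ x (Z a))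
  rw [abs_div, abs_decisionSign_mul]
  gcongr
  exact abs_qfunScaleDeriv_le σ _

theorem deriv_integral_wrongProb_scale_eq (hu : Integrable u μ) (hZ : Measurable Z) {σ : ℝ}
    (hσ : 0 < σ) (l : ℝ) :
    deriv (fun s => ∫ a, u a * wrongProb s l (Z a) ∂μ) σ =
      σ * deriv (deriv fun l => ∫ a, u a * wrongProb σ l (Z a) ∂μ) l := by
  have hderiv : deriv (fun l => ∫ a, u a * wrongProb σ l (Z a) ∂μ) =
      fun l => ∫ a, u a * (decisionSign (Z a) * (gaussDensity ((Z a - l) / σ) / σ)) ∂μ :=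
    funext fun l => (hasDerivAt_integral_wrongProb_threshold hu hZ σ l).deriv
  rw [(hasDerivAt_integral_wrongProb_scale hu hZ hσ l).deriv, hderiv,
    (hasDerivAt_integral_gaussDensity_threshold hu hZ σ l).deriv]
  simp_rw [mul_div_assoc']
  rw [integral_div, mul_div_cancel₀ _ hσ.ne']

lemma setIntegral_decisionSign_mul (hZ : Measurable Z) {g : α → ℝ} {s : Set α}
    (hg : IntegrableOn g s μ) :
    ∫ a in s, decisionSign (Z a) * g a ∂μ =
      (∫ a in s ∩ {a | 0 ≤ Z a}, g a ∂μ) - ∫ a in s ∩ {a | Z a < 0}, g a ∂μ := by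
  have hpos : MeasurableSet {a | 0 ≤ Z a} := hZ measurableSet_Ici
  have hneg : MeasurableSet {a | Z a < 0} := hZ measurableSet_Iio
  have hcompl : {a | 0 ≤ Z a}ᶜ = {a | Z a < 0} := by ext; simp
  have hint : IntegrableOn (fun a => decisionSign (Z a) * g a) s μ :=
    hg.bdd_mul (measurable_decisionSign.comp hZ).aestronglyMeasurable
      (Eventually.of_forall fun a => (abs_decisionSign _).le)
  have hon_pos : ∫ a in {a | 0 ≤ Z a}, decisionSign (Z a) * g a ∂μ.restrict s =
      ∫ a in {a | 0 ≤ Z a}, g a ∂μ.restrict s :=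
    setIntegral_congr_fun hpos fun a ha => by simp [decisionSign, show 0 ≤ Z a from ha]
  have hon_neg : ∫ a in {a | Z a < 0}, decisionSign (Z a) * g a ∂μ.restrict s =
      -∫ a in {a | Z a < 0}, g a ∂μ.restrict s := by
    rw [← integral_neg]
    exact setIntegral_congr_fun hneg fun a ha => by
      simp [decisionSign, not_le.mpr (show Z a < 0 from ha)]
  rw [← integral_add_compl hpos hint, hcompl, hon_pos, hon_neg, Measure.restrict_restrict hpos,
    Measure.restrict_restrict hneg, Set.inter_comm, Set.inter_comm {a | Z a < 0}, sub_eq_add_neg]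

lemma setIntegral_mul_decisionSign_qfunScaleDeriv {s : Set α} (hu : IntegrableOn u s μ)
    (hZ : Measurable Z) (σ l : ℝ) :
    ∫ a in s, u a * (decisionSign (Z a) * qfunScaleDeriv σ (Z a - l)) ∂μ =
      (√(2 * π) * σ ^ 2)⁻¹ *
        ((∫ a in s ∩ {a | 0 ≤ Z a}, u a * exp (-(Z a - l) ^ 2 / (2 * σ ^ 2)) * (Z a - l) ∂μ) -
          ∫ a in s ∩ {a | Z a < 0}, u a * exp (-(Z a - l) ^ 2 / (2 * σ ^ 2)) * (Z a - l) ∂μ) := by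
  have hint : IntegrableOn (fun a => u a * qfunScaleDeriv σ (Z a - l)) s μ :=
    hu.mul_bdd ((measurable_qfunScaleDeriv σ).comp (hZ.sub_const l)).aestronglyMeasurable
      (Eventually.of_forall fun _ => abs_qfunScaleDeriv_le σ _)
  have hexplicit : ∀ a, u a * qfunScaleDeriv σ (Z a - l) =
      (√(2 * π) * σ ^ 2)⁻¹ * (u a * exp (-(Z a - l) ^ 2 / (2 * σ ^ 2)) * (Z a - l)) := fun a => by
    rw [qfunScaleDeriv_eq]; ring
  simp_rw [mul_left_comm (u _)]
  rw [setIntegral_decisionSign_mul hZ hint, mul_sub]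
  simp only [hexplicit, integral_const_mul]

end Integral

theorem stmt3_general (τ0 : ℝ) (D : Set (ℝ × ℝ)) (u : ℝ × ℝ → ℝ)
    (hu_int : IntegrableOn u D volume)
    (lam σ : ℝ) (hσ : 0 < σ) :
    HasDerivAt (fun s => Uloss τ0 D u lam s)
      ((Real.sqrt (2 * Real.pi) * σ ^ 2)⁻¹ *
        ((∫ p in D ∩ {p : ℝ × ℝ | 0 ≤ p.1 + τ0 * p.2},
            u p * Real.exp (-(p.1 + τ0 * p.2 - lam) ^ 2 / (2 * σ ^ 2)) *
              (p.1 + τ0 * p.2 - lam)) -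
         ∫ p in D ∩ {p : ℝ × ℝ | p.1 + τ0 * p.2 < 0},
            u p * Real.exp (-(p.1 + τ0 * p.2 - lam) ^ 2 / (2 * σ ^ 2)) *
              (p.1 + τ0 * p.2 - lam)))
      σ ∧
    (Real.sqrt (2 * Real.pi) * σ ^ 2)⁻¹ *
        ((∫ p in D ∩ {p : ℝ × ℝ | 0 ≤ p.1 + τ0 * p.2},
            u p * Real.exp (-(p.1 + τ0 * p.2 - lam) ^ 2 / (2 * σ ^ 2)) *
              (p.1 + τ0 * p.2 - lam)) -
         ∫ p in D ∩ {p : ℝ × ℝ | p.1 + τ0 * p.2 < 0},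
            u p * Real.exp (-(p.1 + τ0 * p.2 - lam) ^ 2 / (2 * σ ^ 2)) *
              (p.1 + τ0 * p.2 - lam)) =
      σ * deriv (deriv (fun l => Uloss τ0 D u l σ)) lam := by
  have hZ : Measurable fun p : ℝ × ℝ => p.1 + τ0 * p.2 := by fun_prop
  have hU : ∀ l s, Uloss τ0 D u l s = ∫ p in D, u p * wrongProb s l (p.1 + τ0 * p.2) :=
    fun l s => by simp only [Uloss, Pw_eq_wrongProb]
  simp only [hU]
  rw [← setIntegral_mul_decisionSign_qfunScaleDeriv hu_int hZ σ lam,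
    ← deriv_integral_wrongProb_scale_eq hu_int hZ hσ lam]
  have hscale := hasDerivAt_integral_wrongProb_scale hu_int hZ hσ lam
  exact ⟨hscale, hscale.deriv.symm⟩

theorem stmt3 (τ0 : ℝ) (hτ0 : 0 < τ0) (D : Set (ℝ × ℝ)) (hDmeas : MeasurableSet D)
    (hDbdd : Bornology.IsBounded D) (u : ℝ × ℝ → ℝ)
    (hu_int : IntegrableOn u D volume)
    (hu_pos : ∀ p ∈ D, 0 < u p)
    (lam σ : ℝ) (hσ : 0 < σ) :
    HasDerivAt (fun s => Uloss τ0 D u lam s)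
      ((Real.sqrt (2 * Real.pi) * σ ^ 2)⁻¹ *
        ((∫ p in D ∩ {p : ℝ × ℝ | 0 ≤ p.1 + τ0 * p.2},
            u p * Real.exp (-(p.1 + τ0 * p.2 - lam) ^ 2 / (2 * σ ^ 2)) *
              (p.1 + τ0 * p.2 - lam)) -
         ∫ p in D ∩ {p : ℝ × ℝ | p.1 + τ0 * p.2 < 0},
            u p * Real.exp (-(p.1 + τ0 * p.2 - lam) ^ 2 / (2 * σ ^ 2)) *
              (p.1 + τ0 * p.2 - lam)))
      σ ∧
    (Real.sqrt (2 * Real.pi) * σ ^ 2)⁻¹ *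
        ((∫ p in D ∩ {p : ℝ × ℝ | 0 ≤ p.1 + τ0 * p.2},
            u p * Real.exp (-(p.1 + τ0 * p.2 - lam) ^ 2 / (2 * σ ^ 2)) *
              (p.1 + τ0 * p.2 - lam)) -
         ∫ p in D ∩ {p : ℝ × ℝ | p.1 + τ0 * p.2 < 0},
            u p * Real.exp (-(p.1 + τ0 * p.2 - lam) ^ 2 / (2 * σ ^ 2)) *
              (p.1 + τ0 * p.2 - lam)) =
      σ * deriv (deriv (fun l => Uloss τ0 D u l σ)) lam :=
  stmt3_general τ0 D u hu_int lam σ hσ
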